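/- arXiv:2007.10267 — 11 statements merged into one kernel-verified Lean document; each statement's English description precedes it below -/
import Mathlib

section
/- If (V,ρ,φ) is a representation of a multiplicative 3-Hom-Lie algebra (A,[·,·,·],α) with φ invertible, then the map ρ* defined by ⟨ρ*(x,y)(ξ),u⟩ = -⟨ξ, ρ(α⁻¹(x),α⁻¹(y))(φ⁻²(u))⟩ is a representation of A on the dual space V* with respect to the map (φ⁻¹)*. -/
section DualAux
variable {K V : Type*} [Field K] [AddCommGroup V] [Module K V]

lemma dmul' (f g : Module.End K V) :
    (LinearMap.dualMap f) * (LinearMap.dualMap g)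
      = LinearMap.dualMap (g * f : Module.End K V) := rfl

lemma dneg' (f : Module.End K V) :
    LinearMap.dualMap (-f) = - LinearMap.dualMap f := by
  ext ξ v; simp

lemma dadd' (f g : Module.End K V) :
    LinearMap.dualMap (f + g) = LinearMap.dualMap f + LinearMap.dualMap g := by
  ext ξ v; simp

lemma dsub' (f g : Module.End K V) :
    LinearMap.dualMap (f - g) = LinearMap.dualMap f - LinearMap.dualMap g := by
  ext ξ v; simp
end DualAux


/-- A (multiplicative) 3-Hom-Lie algebra structure: a skew-symmetric trilinear
bracket `b` together with a twist map `α` satisfying the Hom-fundamental identity. -/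
def Is3HomLie {A : Type*} [AddCommGroup A] (b : A → A → A → A) (α : A → A) : Prop :=
  (∀ x y z, b x y z = - b y x z) ∧
  (∀ x y z, b x y z = - b x z y) ∧
  (∀ x₁ x₂ x₃ x₄ x₅,
    b (α x₁) (α x₂) (b x₃ x₄ x₅) =
      b (b x₁ x₂ x₃) (α x₄) (α x₅) + b (α x₃) (b x₁ x₂ x₄) (α x₅) +
        b (α x₃) (α x₄) (b x₁ x₂ x₅))

/-- A representation of a 3-Hom-Lie algebra `(A, b, α)` on `V` with respect to
`φ ∈ End(V)`: a skew-symmetric map `ρ : Λ²A → gl(V)` satisfying the three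
compatibility conditions. -/
def IsRep (K : Type*) [Field K] {A V : Type*} [AddCommGroup V] [Module K V]
    (b : A → A → A → A) (α : A → A) (ρ : A → A → Module.End K V)
    (φ : Module.End K V) : Prop :=
  (∀ x y, ρ x y = - ρ y x) ∧
  (∀ x₁ x₂, φ * ρ x₁ x₂ = ρ (α x₁) (α x₂) * φ) ∧
  (∀ x₁ x₂ x₃ x₄,
    ρ (α x₁) (α x₂) * ρ x₃ x₄ - ρ (α x₃) (α x₄) * ρ x₁ x₂ =
      ρ (b x₁ x₂ x₃) (α x₄) * φ - ρ (b x₁ x₂ x₄) (α x₃) * φ) ∧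
  (∀ x₁ x₂ x₃ x₄,
    ρ (b x₁ x₂ x₃) (α x₄) * φ =
      ρ (α x₁) (α x₂) * ρ x₃ x₄ + ρ (α x₂) (α x₃) * ρ x₁ x₄ +
        ρ (α x₃) (α x₁) * ρ x₂ x₄)

/-- The dual representation of a representation of a multiplicative 3-Hom-Lie
algebra, defined by `⟨ρ*(x,y)ξ, u⟩ = -⟨ξ, ρ(α⁻¹x, α⁻¹y)(φ⁻²u)⟩`, is a
representation on `V*` with respect to `(φ⁻¹)*`. -/
theorem stmt0 {K A V : Type*} [Field K] [AddCommGroup A] [Module K A]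
    [AddCommGroup V] [Module K V]
    (b : A → A → A → A) (α : A ≃ₗ[K] A) (φ : V ≃ₗ[K] V)
    (ρ : A → A → Module.End K V)
    (hA : Is3HomLie b (fun x => α x))
    (hmult : ∀ x y z, α (b x y z) = b (α x) (α y) (α z))
    (hrep : IsRep K b (fun x => α x) ρ (φ.toLinearMap)) :
    IsRep K b (fun x => α x)
      (fun x y =>
        - LinearMap.dualMap
            ((ρ (α.symm x) (α.symm y)) ∘ₗ (φ.symm.toLinearMap ∘ₗ φ.symm.toLinearMap)))
      (LinearMap.dualMap φ.symm.toLinearMap) := by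
  obtain ⟨hskew, hcomm, h3, h4⟩ := hrep
  simp only [] at hcomm h3 h4
  set φl : Module.End K V := φ.toLinearMap with hφl
  set φi : Module.End K V := φ.symm.toLinearMap with hφi
  have hmult' : ∀ x y z, α.symm (b x y z)
      = b (α.symm x) (α.symm y) (α.symm z) := by
    intro x y z
    apply α.injective
    rw [hmult, LinearEquiv.apply_symm_apply, LinearEquiv.apply_symm_apply,
      LinearEquiv.apply_symm_apply, LinearEquiv.apply_symm_apply]
  have hφ1 : ∀ g : Module.End K V, φl * (φi * g) = g := by
    intro g; ext v; simp [hφl, hφi, Module.End.mul_apply]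
  have hφ2 : ∀ g : Module.End K V, φi * (φl * g) = g := by
    intro g; ext v; simp [hφl, hφi, Module.End.mul_apply]
  -- helper algebra lemmas (instance issues prevent using generic `neg_mul` etc.)
  have hnmD : ∀ f g : Module.End K (Module.Dual K V), (-f) * g = -(f * g) := by
    intro f g; ext ξ v; simp [Module.End.mul_apply]
  have hmnD : ∀ f g : Module.End K (Module.Dual K V), f * (-g) = -(f * g) := by
    intro f g; ext ξ v; simp [Module.End.mul_apply]
  have enm : ∀ f g : Module.End K V, (-f) * g = -(f * g) := by
    intro f g; ext v; simp [Module.End.mul_apply]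
  have emn : ∀ f g : Module.End K V, f * (-g) = -(f * g) := by
    intro f g; ext v; simp [Module.End.mul_apply]
  have eam : ∀ f g h : Module.End K V, (f + g) * h = f * h + g * h := by
    intro f g h; ext v; simp [Module.End.mul_apply]
  have esm : ∀ f g h : Module.End K V, (f - g) * h = f * h - g * h := by
    intro f g h; ext v; simp [Module.End.mul_apply]
  have hc : ∀ x y (g : Module.End K V),
      φi * (ρ x y * g) = ρ (α.symm x) (α.symm y) * (φi * g) := by
    intro x y g
    have h := hcomm (α.symm x) (α.symm y)
    simp only [LinearEquiv.apply_symm_apply] at h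
    calc φi * (ρ x y * g)
        = φi * (ρ x y * (φl * (φi * g))) := by rw [hφ1]
      _ = φi * (φl * (ρ (α.symm x) (α.symm y) * (φi * g))) := by
          rw [← mul_assoc (ρ x y) φl, ← h, mul_assoc]
      _ = ρ (α.symm x) (α.symm y) * (φi * g) := hφ2 _
  have key : ∀ y₁ y₂ y₃ y₄ : A,
      ρ (α y₃) (α y₄) * ρ y₁ y₂ + ρ (α y₁) (α y₄) * ρ y₂ y₃ +
        ρ (α y₂) (α y₄) * ρ y₃ y₁ = -(ρ (b y₁ y₂ y₃) (α y₄) * φl) := by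
    intro y₁ y₂ y₃ y₄
    have E1 := h4 y₁ y₂ y₃ y₄
    have E2 := h4 y₁ y₂ y₄ y₃
    have E3 := h3 y₁ y₂ y₃ y₄
    rw [E1, E2] at E3
    rw [hskew y₄ y₃, hskew (α y₄) (α y₁), hskew y₁ y₃] at E3
    rw [E1]
    simp only [emn, enm] at E3 ⊢
    linear_combination (norm := abel1) -E3
  refine ⟨fun x y => ?_, fun x₁ x₂ => ?_, fun x₁ x₂ x₃ x₄ => ?_,
    fun x₁ x₂ x₃ x₄ => ?_⟩
  · -- skew-symmetry
    beta_reduce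
    rw [hskew (α.symm x) (α.symm y), LinearMap.neg_comp, dneg']
  · -- compatibility with φ
    beta_reduce
    simp only [LinearEquiv.symm_apply_apply, ← Module.End.mul_eq_comp,
      ← dneg', dmul']
    refine congrArg LinearMap.dualMap ?_
    simp only [enm, emn, neg_neg, mul_assoc]
    simp only [hc]
  · -- third condition
    beta_reduce
    simp only [LinearEquiv.symm_apply_apply, hmult', ← Module.End.mul_eq_comp,
      ← dneg', dmul', ← dadd', ← dsub']
    refine congrArg LinearMap.dualMap ?_
    simp only [enm, emn, neg_neg, sub_neg_eq_add, mul_assoc]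
    simp only [hc, hmult']
    have h3' := h3 (α.symm (α.symm x₁)) (α.symm (α.symm x₂))
      (α.symm (α.symm x₃)) (α.symm (α.symm x₄))
    simp only [LinearEquiv.apply_symm_apply] at h3'
    have h3'' := congrArg (· * (φi * (φi * (φi * φi)))) h3'
    simp only [esm, mul_assoc, hφ1] at h3''
    linear_combination (norm := abel1) -h3''
  · -- fourth condition
    beta_reduce
    simp only [LinearEquiv.symm_apply_apply, hmult', ← Module.End.mul_eq_comp,
      ← dneg', dmul', ← dadd', ← dsub']
    refine congrArg LinearMap.dualMap ?_
    simp only [enm, emn, neg_neg, sub_neg_eq_add, mul_assoc]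
    simp only [hc, hmult']
    have k := key (α.symm (α.symm x₁)) (α.symm (α.symm x₂))
      (α.symm (α.symm x₃)) (α.symm (α.symm x₄))
    simp only [LinearEquiv.apply_symm_apply] at k
    have k' := congrArg (· * (φi * (φi * (φi * φi)))) k
    simp only [eam, enm, mul_assoc, hφ1] at k'
    linear_combination (norm := abel1) -k'
end

section
/- Let (V,ρ,φ) be a representation of a 3-Hom-Lie algebra (A,[·,·,·],α). Then (ρ([x₁,x₂,x₃],α(x₄)) - ρ([x₁,x₂,x₄],α(x₃)) + ρ([x₁,x₃,x₄],α(x₂)) - ρ([x₂,x₃,x₄],α(x₁)))∘φ = 0 for all x₁,x₂,x₃,x₄ ∈ A. -/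
theorem stmt1 {K A V : Type*} [Field K] [AddCommGroup A]
    [AddCommGroup V] [Module K V]
    (b : A → A → A → A) (α : A → A) (ρ : A → A → Module.End K V)
    (φ : Module.End K V)
    (hA : Is3HomLie b α) (hrep : IsRep K b α ρ φ) :
    ∀ x₁ x₂ x₃ x₄ : A,
      (ρ (b x₁ x₂ x₃) (α x₄) - ρ (b x₁ x₂ x₄) (α x₃) +
        ρ (b x₁ x₃ x₄) (α x₂) - ρ (b x₂ x₃ x₄) (α x₁)) * φ = 0 := by
  intro x₁ x₂ x₃ x₄
  have hcyc : ∀ x y z, b x y z = b y z x := by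
    intro x y z
    rw [hA.1 x y z, hA.2.1 y x z, neg_neg]
  have e1 := hrep.2.2.1 x₁ x₂ x₃ x₄
  have e2 := hrep.2.2.1 x₃ x₄ x₁ x₂
  have key : (ρ (α x₁) (α x₂) * ρ x₃ x₄ - ρ (α x₃) (α x₄) * ρ x₁ x₂) +
      (ρ (α x₃) (α x₄) * ρ x₁ x₂ - ρ (α x₁) (α x₂) * ρ x₃ x₄) = 0 := by abel
  rw [e1, e2] at key
  rw [hcyc x₁ x₃ x₄, hcyc x₂ x₃ x₄, ← key]
  noncomm_ring
end

section
/- Let (V,ρ,φ) be a representation of a 3-Hom-Lie algebra (A,[·,·,·],α). Then the cyclic-type sum ρ(α(x₁),α(x₂))ρ(x₃,x₄) + ρ(α(x₂),α(x₃))ρ(x₁,x₄) + ρ(α(x₃),α(x₁))ρ(x₂,x₄) + ρ(α(x₃),α(x₄))ρ(x₁,x₂) + ρ(α(x₁),α(x₄))ρ(x₂,x₃) + ρ(α(x₂),α(x₄))ρ(x₃,x₁) = 0 for all x₁,x₂,x₃,x₄ ∈ A. -/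
theorem stmt2 {K A V : Type*} [Field K] [AddCommGroup A]
    [AddCommGroup V] [Module K V]
    (b : A → A → A → A) (α : A → A) (ρ : A → A → Module.End K V)
    (φ : Module.End K V)
    (hA : Is3HomLie b α) (hrep : IsRep K b α ρ φ) :
    ∀ x₁ x₂ x₃ x₄ : A,
      ρ (α x₁) (α x₂) * ρ x₃ x₄ + ρ (α x₂) (α x₃) * ρ x₁ x₄ +
        ρ (α x₃) (α x₁) * ρ x₂ x₄ + ρ (α x₃) (α x₄) * ρ x₁ x₂ +
        ρ (α x₁) (α x₄) * ρ x₂ x₃ + ρ (α x₂) (α x₄) * ρ x₃ x₁ = 0 := by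
  obtain ⟨hs, -, h3, h4⟩ := hrep
  intro x₁ x₂ x₃ x₄
  linear_combination (norm := noncomm_ring)
    - h4 x₁ x₂ x₃ x₄ - h3 x₁ x₂ x₃ x₄ + h4 x₁ x₂ x₄ x₃
    + ρ (α x₁) (α x₂) * hs x₃ x₄ + hs (α x₁) (α x₄) * ρ x₂ x₃
    + ρ (α x₂) (α x₄) * hs x₃ x₁
end

section
/- Let (A,{·,·,·},α) be a 3-Hom-pre-Lie algebra. Then for all x₁,...,x₅ ∈ A: {[x₁,x₂,x₃]^C,α(x₄),α(x₅)} - {[x₁,x₂,x₄]^C,α(x₃),α(x₅)} + {[x₁,x₃,x₄]^C,α(x₂),α(x₅)} - {[x₂,x₃,x₄]^C,α(x₁),α(x₅)} = 0. -/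
/-- The sub-adjacent bracket `[x,y,z]^C = {x,y,z} + {y,z,x} + {z,x,y}`. -/
def preC {A : Type*} [AddCommGroup A] (p : A → A → A → A) : A → A → A → A :=
  fun x y z => p x y z + p y z x + p z x y

/-- A 3-Hom-pre-Lie algebra structure: `p` skew-symmetric in the first two
arguments, satisfying the two Hom-pre-Lie identities. -/
def Is3HomPreLie {A : Type*} [AddCommGroup A] (p : A → A → A → A) (α : A → A) : Prop :=
  (∀ x y z, p x y z = - p y x z) ∧
  (∀ x₁ x₂ x₃ x₄ x₅,
    p (α x₁) (α x₂) (p x₃ x₄ x₅) =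
      p (preC p x₁ x₂ x₃) (α x₄) (α x₅) + p (α x₃) (preC p x₁ x₂ x₄) (α x₅) +
        p (α x₃) (α x₄) (p x₁ x₂ x₅)) ∧
  (∀ x₁ x₂ x₃ x₄ x₅,
    p (preC p x₁ x₂ x₃) (α x₄) (α x₅) =
      p (α x₁) (α x₂) (p x₃ x₄ x₅) + p (α x₂) (α x₃) (p x₁ x₄ x₅) +
        p (α x₃) (α x₁) (p x₂ x₄ x₅))

lemma preC_cyclic {A : Type*} [AddCommGroup A] (p : A → A → A → A) (a b c : A) :
    preC p a b c = preC p c a b := by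
  simp only [preC]; abel

lemma key_diff {A : Type*} [AddCommGroup A]
    (p : A → A → A → A) (α : A → A) (h : Is3HomPreLie p α) (a b c d e : A) :
    p (preC p a b c) (α d) (α e) - p (preC p a b d) (α c) (α e) =
      p (α a) (α b) (p c d e) - p (α c) (α d) (p a b e) := by
  obtain ⟨hs, h2, _⟩ := h
  have := h2 a b c d e
  rw [hs (α c) (preC p a b d) (α e)] at this
  rw [this]; abel

theorem stmt6 {A : Type*} [AddCommGroup A]
    (p : A → A → A → A) (α : A → A) (h : Is3HomPreLie p α) :
    ∀ x₁ x₂ x₃ x₄ x₅ : A,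
      p (preC p x₁ x₂ x₃) (α x₄) (α x₅) - p (preC p x₁ x₂ x₄) (α x₃) (α x₅) +
        p (preC p x₁ x₃ x₄) (α x₂) (α x₅) - p (preC p x₂ x₃ x₄) (α x₁) (α x₅) = 0 := by
  intro x₁ x₂ x₃ x₄ x₅
  have h1 := key_diff p α h x₁ x₂ x₃ x₄ x₅
  have h2 := key_diff p α h x₃ x₄ x₁ x₂ x₅
  rw [preC_cyclic p x₃ x₄ x₁, preC_cyclic p x₃ x₄ x₂] at h2
  calc p (preC p x₁ x₂ x₃) (α x₄) (α x₅) - p (preC p x₁ x₂ x₄) (α x₃) (α x₅) +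
        p (preC p x₁ x₃ x₄) (α x₂) (α x₅) - p (preC p x₂ x₃ x₄) (α x₁) (α x₅)
      = (p (preC p x₁ x₂ x₃) (α x₄) (α x₅) - p (preC p x₁ x₂ x₄) (α x₃) (α x₅)) +
        (p (preC p x₁ x₃ x₄) (α x₂) (α x₅) - p (preC p x₂ x₃ x₄) (α x₁) (α x₅)) := by abel
    _ = (p (α x₁) (α x₂) (p x₃ x₄ x₅) - p (α x₃) (α x₄) (p x₁ x₂ x₅)) +
        (p (α x₃) (α x₄) (p x₁ x₂ x₅) - p (α x₁) (α x₂) (p x₃ x₄ x₅)) := by rw [h1, h2]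
    _ = 0 := by abel
end

section
/- Let (A,{·,·,·},α) be a 3-Hom-pre-Lie algebra. Then for all x₁,...,x₅ ∈ A: {α(x₁),α(x₂),{x₃,x₄,x₅}} + {α(x₃),α(x₄),{x₁,x₂,x₅}} + {α(x₂),α(x₄),{x₃,x₁,x₅}} + {α(x₃),α(x₁),{x₂,x₄,x₅}} + {α(x₂),α(x₃),{x₁,x₄,x₅}} + {α(x₁),α(x₄),{x₂,x₃,x₅}} = 0. -/
theorem stmt7 {A : Type*} [AddCommGroup A]
    (p : A → A → A → A) (α : A → A) (h : Is3HomPreLie p α) :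
    ∀ x₁ x₂ x₃ x₄ x₅ : A,
      p (α x₁) (α x₂) (p x₃ x₄ x₅) + p (α x₃) (α x₄) (p x₁ x₂ x₅) +
        p (α x₂) (α x₄) (p x₃ x₁ x₅) + p (α x₃) (α x₁) (p x₂ x₄ x₅) +
        p (α x₂) (α x₃) (p x₁ x₄ x₅) + p (α x₁) (α x₄) (p x₂ x₃ x₅) = 0 := by
  obtain ⟨hs, h1, h2⟩ := h
  intro x₁ x₂ x₃ x₄ x₅
  have hcyc : ∀ a b c : A, preC p a b c = preC p b c a := by
    intro a b c; simp only [preC]; abel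
  have cC : p (preC p x₂ x₁ x₃) (α x₄) (α x₅) = p (preC p x₁ x₃ x₂) (α x₄) (α x₅) := by
    rw [hcyc x₂ x₁ x₃]
  have cM3 : p (α x₃) (preC p x₂ x₁ x₄) (α x₅) = p (α x₃) (preC p x₁ x₄ x₂) (α x₅) := by
    rw [hcyc x₂ x₁ x₄]
  have cM4 : p (α x₄) (preC p x₂ x₃ x₁) (α x₅) = p (α x₄) (preC p x₁ x₂ x₃) (α x₅) := by
    rw [hcyc x₂ x₃ x₁, hcyc x₃ x₁ x₂]
  linear_combination (norm := abel)
    - h1 x₁ x₂ x₃ x₄ x₅ - h1 x₁ x₂ x₄ x₃ x₅ - h1 x₁ x₃ x₄ x₂ x₅ + h1 x₁ x₄ x₂ x₃ x₅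
    + h1 x₁ x₄ x₃ x₂ x₅ - h1 x₂ x₁ x₃ x₄ x₅ + h1 x₂ x₃ x₄ x₁ x₅
    - h2 x₁ x₂ x₃ x₄ x₅ - h2 x₁ x₃ x₄ x₂ x₅ + h2 x₁ x₄ x₂ x₃ x₅ + h2 x₂ x₃ x₄ x₁ x₅
    - hs (α x₃) (preC p x₁ x₂ x₄) (α x₅) - hs (α x₄) (preC p x₁ x₃ x₂) (α x₅)
    + hs (α x₂) (preC p x₁ x₄ x₃) (α x₅)
    + hs (α x₁) (α x₂) (p x₃ x₄ x₅) + hs (α x₁) (α x₂) (p x₄ x₃ x₅)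
    + hs (α x₁) (α x₄) (p x₂ x₃ x₅) - hs (α x₁) (α x₄) (p x₃ x₂ x₅)
    + hs (α x₂) (α x₃) (p x₁ x₄ x₅) + hs (α x₂) (α x₄) (p x₃ x₁ x₅)
    - hs (α x₃) (α x₄) (p x₁ x₂ x₅)
    - cC - cM3 + cM4
end

section
/- Let (A,{·,·,·}) be a 3-pre-Lie algebra with representation (V,l,r), and let α: A → A, φ: V → V be morphisms with φ∘l(x₁,x₂) = l(α(x₁),α(x₂))∘φ and φ∘r(x₁,x₂) = r(α(x₁),α(x₂))∘φ. Then (V, φ∘l, φ∘r, φ) is a representation of the 3-Hom-pre-Lie algebra (A, α∘{·,·,·}, α). -/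
/-- A representation `(l, r, φ)` of a 3-Hom-pre-Lie algebra `(A, p, α)` on `V`:
`l` is a representation of the sub-adjacent 3-Hom-Lie algebra with respect to `φ`,
and `r` satisfies the four compatibility identities, where
`μ(x,y) = l(x,y) + r(x,y) - r(y,x)`. -/
def IsPreRep (K : Type*) [Field K] {A V : Type*} [AddCommGroup A]
    [AddCommGroup V] [Module K V]
    (p : A → A → A → A) (α : A → A) (l r : A → A → Module.End K V)
    (φ : Module.End K V) : Prop :=
  IsRep K (preC p) α l φ ∧
  (∀ x₁ x₂, φ * r x₁ x₂ = r (α x₁) (α x₂) * φ) ∧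
  (∀ x₁ x₂ x₃ x₄,
    l (α x₁) (α x₂) * r x₃ x₄ =
      r (α x₃) (α x₄) * (l x₁ x₂ + r x₁ x₂ - r x₂ x₁) +
        r (preC p x₁ x₂ x₃) (α x₄) * φ + r (α x₃) (p x₁ x₂ x₄) * φ) ∧
  (∀ x₁ x₂ x₃ x₄,
    r (preC p x₁ x₂ x₃) (α x₄) * φ =
      l (α x₁) (α x₂) * r x₃ x₄ + l (α x₂) (α x₃) * r x₁ x₄ +
        l (α x₃) (α x₁) * r x₂ x₄) ∧
  (∀ x₁ x₂ x₃ x₄,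
    r (α x₁) (p x₂ x₃ x₄) * φ =
      r (α x₃) (α x₄) * (l x₁ x₂ + r x₁ x₂ - r x₂ x₁) -
        r (α x₂) (α x₄) * (l x₁ x₃ + r x₁ x₃ - r x₃ x₁) +
        l (α x₂) (α x₃) * r x₁ x₄) ∧
  (∀ x₁ x₂ x₃ x₄,
    r (α x₃) (α x₄) * (l x₁ x₂ + r x₁ x₂ - r x₂ x₁) =
      l (α x₁) (α x₂) * r x₃ x₄ - r (α x₂) (p x₁ x₃ x₄) * φ +
        r (α x₁) (p x₂ x₃ x₄) * φ)

/-- Yau twist of a representation of a 3-pre-Lie algebra: `(V, φ∘l, φ∘r, φ)` is a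
representation of the 3-Hom-pre-Lie algebra `(A, α∘{·,·,·}, α)`. -/
theorem stmt8 {K A V : Type*} [Field K] [AddCommGroup A] [Module K A]
    [AddCommGroup V] [Module K V]
    (p : A → A → A → A) (l r : A → A → Module.End K V)
    (α : A →ₗ[K] A) (φ : Module.End K V)
    (halg : Is3HomPreLie p id)
    (hrep : IsPreRep K p id l r 1)
    (hmorph : ∀ x y z, α (p x y z) = p (α x) (α y) (α z))
    (hl : ∀ x y, φ * l x y = l (α x) (α y) * φ)
    (hr : ∀ x y, φ * r x y = r (α x) (α y) * φ) :
    IsPreRep K (fun x y z => α (p x y z)) (fun x => α x)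
      (fun x y => φ * l x y) (fun x y => φ * r x y) φ := by
  obtain ⟨⟨lskew, lphi, l3, l4⟩, hrc, h3, h4, h5, h6⟩ := hrep
  simp only [id_eq, mul_one, one_mul] at lskew lphi l3 l4 hrc h3 h4 h5 h6
  have hC : ∀ x y z, preC (fun x y z => α (p x y z)) x y z = α (preC p x y z) := by
    intro x y z; simp [preC, map_add]
  have hl2 : ∀ x y, l (α x) (α y) * φ = φ * l x y := fun x y => (hl x y).symm
  have hr2 : ∀ x y, r (α x) (α y) * φ = φ * r x y := fun x y => (hr x y).symm
  have hl3 : ∀ x y (c : Module.End K V), l (α x) (α y) * (φ * c) = φ * (l x y * c) := by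
    intro x y c; rw [← mul_assoc, hl2, mul_assoc]
  have hr3 : ∀ x y (c : Module.End K V), r (α x) (α y) * (φ * c) = φ * (r x y * c) := by
    intro x y c; rw [← mul_assoc, hr2, mul_assoc]
  refine ⟨⟨?_, ?_, ?_, ?_⟩, ?_, ?_, ?_, ?_, ?_⟩
  · intro x y
    simp [lskew x y]
  · intro x y
    rw [mul_assoc, ← hl, ← mul_assoc]
  · intro x₁ x₂ x₃ x₄
    have h := l3 x₁ x₂ x₃ x₄
    simp only [hC, mul_assoc, hl3, hl2, ← mul_sub]
    rw [h]
  · intro x₁ x₂ x₃ x₄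
    have h := l4 x₁ x₂ x₃ x₄
    simp only [hC, mul_assoc, hl3, hl2, ← mul_add]
    rw [h]
  · intro x y
    rw [mul_assoc, ← hr, ← mul_assoc]
  · intro x₁ x₂ x₃ x₄
    have h := h3 x₁ x₂ x₃ x₄
    simp only [hC, mul_assoc, hl3, hr3, hl2, hr2, ← mul_add, ← mul_sub]
    rw [h]
  · intro x₁ x₂ x₃ x₄
    have h := h4 x₁ x₂ x₃ x₄
    simp only [hC, mul_assoc, hl3, hr3, hl2, hr2, ← mul_add]
    rw [h]
  · intro x₁ x₂ x₃ x₄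
    have h := h5 x₁ x₂ x₃ x₄
    simp only [hC, ← hmorph, mul_assoc, hl3, hr3, hl2, hr2, ← mul_add, ← mul_sub]
    rw [h]
  · intro x₁ x₂ x₃ x₄
    have h := h6 x₁ x₂ x₃ x₄
    simp only [hC, ← hmorph, mul_assoc, hl3, hr3, hl2, hr2, ← mul_add, ← mul_sub]
    rw [h]
end

section
/- If (A,↖,↗) is a 3-L-dendriform algebra and α: A → A is an algebra morphism, then the products ↖_α(x,y,z) = ↖(α(x),α(y),α(z)) and ↗_α(x,y,z) = ↗(α(x),α(y),α(z)) make (A,↖_α,↗_α,α) a 3-Hom-L-dendriform algebra (Yau twist). -/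
/-- The horizontal product `{x,y,z}^h = ↖(x,y,z) + ↗(x,y,z) - ↗(y,x,z)`. -/
def dh {A : Type*} [AddCommGroup A] (nw ne : A → A → A → A) : A → A → A → A :=
  fun x y z => nw x y z + ne x y z - ne y x z

/-- The vertical product `{x,y,z}^v = ↖(x,y,z) + ↗(z,x,y) - ↗(z,y,x)`. -/
def dv {A : Type*} [AddCommGroup A] (nw ne : A → A → A → A) : A → A → A → A :=
  fun x y z => nw x y z + ne z x y - ne z y x

/-- The bracket `[x,y,z]^C`, the cyclic sum of `{x,y,z}^h`. -/
def dC {A : Type*} [AddCommGroup A] (nw ne : A → A → A → A) : A → A → A → A :=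
  fun x y z => dh nw ne x y z + dh nw ne y z x + dh nw ne z x y

/-- A 3-Hom-L-dendriform algebra structure `(A, ↖, ↗, α)`. -/
def IsDend {A : Type*} [AddCommGroup A] (nw ne : A → A → A → A) (α : A → A) : Prop :=
  (∀ x y z, nw x y z + nw y x z = 0) ∧
  (∀ x₁ x₂ x₃ x₄ x₅,
    nw (α x₁) (α x₂) (nw x₃ x₄ x₅) - nw (α x₃) (α x₄) (nw x₁ x₂ x₅) =
      nw (dC nw ne x₁ x₂ x₃) (α x₄) (α x₅) - nw (dC nw ne x₁ x₂ x₄) (α x₃) (α x₅)) ∧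
  (∀ x₁ x₂ x₃ x₄ x₅,
    nw (α x₁) (α x₂) (ne x₅ x₃ x₄) - ne (α x₅) (α x₃) (dh nw ne x₁ x₂ x₄) =
      ne (α x₅) (dC nw ne x₁ x₂ x₃) (α x₄) + ne (dv nw ne x₁ x₂ x₅) (α x₃) (α x₄)) ∧
  (∀ x₁ x₂ x₃ x₄ x₅,
    ne (α x₅) (α x₁) (dh nw ne x₂ x₃ x₄) - nw (α x₂) (α x₃) (ne x₅ x₁ x₄) =
      ne (dv nw ne x₁ x₂ x₅) (α x₃) (α x₄) - ne (dv nw ne x₁ x₃ x₅) (α x₂) (α x₄)) ∧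
  (∀ x₁ x₂ x₃ x₄ x₅,
    nw (dC nw ne x₁ x₂ x₃) (α x₄) (α x₅) =
      nw (α x₁) (α x₂) (nw x₃ x₄ x₅) + nw (α x₂) (α x₃) (nw x₁ x₄ x₅) +
        nw (α x₃) (α x₁) (nw x₂ x₄ x₅)) ∧
  (∀ x₁ x₂ x₃ x₄ x₅,
    ne (α x₅) (dC nw ne x₁ x₂ x₃) (α x₄) =
      nw (α x₁) (α x₂) (ne x₅ x₃ x₄) + nw (α x₂) (α x₃) (ne x₅ x₁ x₄) +
        nw (α x₃) (α x₁) (ne x₅ x₂ x₄)) ∧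
  (∀ x₁ x₂ x₃ x₄ x₅,
    nw (α x₁) (α x₂) (ne x₅ x₃ x₄) + ne (α x₅) (α x₁) (dh nw ne x₂ x₃ x₄) =
      ne (α x₅) (α x₂) (dh nw ne x₁ x₃ x₄) + ne (dv nw ne x₁ x₂ x₅) (α x₃) (α x₄))

/-- Yau twist: twisting a 3-L-dendriform algebra along an algebra morphism `α`
yields a 3-Hom-L-dendriform algebra. -/
theorem stmt10 {K A : Type*} [Field K] [AddCommGroup A] [Module K A]
    (nw ne : A → A → A → A) (α : A →ₗ[K] A)
    (h : IsDend nw ne id)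
    (hnw : ∀ x y z, α (nw x y z) = nw (α x) (α y) (α z))
    (hne : ∀ x y z, α (ne x y z) = ne (α x) (α y) (α z)) :
    IsDend (fun x y z => nw (α x) (α y) (α z)) (fun x y z => ne (α x) (α y) (α z))
      (fun x => α x) := by
  obtain ⟨h1, h2, h3, h4, h5, h6, h7⟩ := h
  simp only [id_eq] at h1 h2 h3 h4 h5 h6 h7
  have hdh : ∀ x y z : A, α (dh nw ne x y z) = dh nw ne (α x) (α y) (α z) := by
    intro x y z; simp [dh, hnw, hne]
  have hdv : ∀ x y z : A, α (dv nw ne x y z) = dv nw ne (α x) (α y) (α z) := by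
    intro x y z; simp [dv, hnw, hne]
  have hdC : ∀ x y z : A, α (dC nw ne x y z) = dC nw ne (α x) (α y) (α z) := by
    intro x y z; simp [dC, hdh]
  have cdh : ∀ x y z : A, dh (fun x y z => nw (α x) (α y) (α z))
      (fun x y z => ne (α x) (α y) (α z)) x y z = dh nw ne (α x) (α y) (α z) := fun _ _ _ => rfl
  have cdv : ∀ x y z : A, dv (fun x y z => nw (α x) (α y) (α z))
      (fun x y z => ne (α x) (α y) (α z)) x y z = dv nw ne (α x) (α y) (α z) := fun _ _ _ => rfl
  have cdC : ∀ x y z : A, dC (fun x y z => nw (α x) (α y) (α z))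
      (fun x y z => ne (α x) (α y) (α z)) x y z = dC nw ne (α x) (α y) (α z) := fun _ _ _ => rfl
  refine ⟨?_, ?_, ?_, ?_, ?_, ?_, ?_⟩ <;> intros <;>
    simp only [cdh, cdv, cdC, hnw, hne, hdh, hdv, hdC]
  · rw [← hnw, ← hnw, ← map_add, h1, map_zero]
  · exact h2 _ _ _ _ _
  · exact h3 _ _ _ _ _
  · exact h4 _ _ _ _ _
  · exact h5 _ _ _ _ _
  · exact h6 _ _ _ _ _
  · exact h7 _ _ _ _ _
end

section
/- Let (A,{·,·,·},α) be a 3-Hom-pre-Lie algebra, (V,l,r,φ) a representation, and T: V → A an O-operator (i.e. Tφ = αT and {Tu,Tv,Tw} = T(l(Tu,Tv)w - r(Tu,Tw)v + r(Tv,Tw)u)). Then the products ↖(u,v,w) = l(Tu,Tv)w and ↗(u,v,w) = r(Tv,Tw)u make (V,↖,↗,φ) a 3-Hom-L-dendriform algebra. -/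
/-- An O-operator on a 3-Hom-pre-Lie algebra induces a 3-Hom-L-dendriform
algebra structure on `V`. -/
theorem stmt12 {K A V : Type*} [Field K] [AddCommGroup A] [Module K A]
    [AddCommGroup V] [Module K V]
    (p : A → A → A → A) (α : A → A) (l r : A → A → Module.End K V)
    (φ : Module.End K V) (T : V →ₗ[K] A)
    (halg : Is3HomPreLie p α)
    (hrep : IsPreRep K p α l r φ)
    (hTφ : ∀ v, T (φ v) = α (T v))
    (hO : ∀ u v w, p (T u) (T v) (T w) =
      T (l (T u) (T v) w - r (T u) (T w) v + r (T v) (T w) u)) :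
    IsDend (fun u v w => l (T u) (T v) w) (fun u v w => r (T v) (T w) u)
      (fun v => φ v) := by

  obtain ⟨⟨hl_skew, hl_phi, hl3, hl4⟩, hr_phi, hc3, hc4, hc5, hc6⟩ := hrep
  have hTdh : ∀ u v w, T (dh (fun u v w => l (T u) (T v) w)
      (fun u v w => r (T v) (T w) u) u v w) = p (T u) (T v) (T w) := by
    intro u v w
    rw [hO]
    simp only [dh, map_add, map_sub]
    abel
  have hTdC : ∀ u v w, T (dC (fun u v w => l (T u) (T v) w)
      (fun u v w => r (T v) (T w) u) u v w) = preC p (T u) (T v) (T w) := by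
    intro u v w
    simp only [dC, preC, map_add, hTdh]
  refine ⟨?_, ?_, ?_, ?_, ?_, ?_, ?_⟩
  · intro x y z
    have h := LinearMap.congr_fun (hl_skew (T x) (T y)) z
    simp only [LinearMap.neg_apply] at h
    simp only [h]
    abel
  · intro x₁ x₂ x₃ x₄ x₅
    have h := LinearMap.congr_fun (hl3 (T x₁) (T x₂) (T x₃) (T x₄)) x₅
    simp only [LinearMap.sub_apply, Module.End.mul_apply] at h
    simp only [hTφ, hTdC]
    linear_combination (norm := module) h
  · intro x₁ x₂ x₃ x₄ x₅
    have h := LinearMap.congr_fun (hc3 (T x₁) (T x₂) (T x₃) (T x₄)) x₅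
    simp only [LinearMap.add_apply, LinearMap.sub_apply, Module.End.mul_apply, map_add, map_sub] at h
    simp only [hTdh, hTdC, dv, hTφ, map_add, map_sub,
      LinearMap.add_apply, LinearMap.sub_apply]
    linear_combination (norm := module) h
  · intro x₁ x₂ x₃ x₄ x₅
    have h := LinearMap.congr_fun (hc5 (T x₁) (T x₂) (T x₃) (T x₄)) x₅
    simp only [LinearMap.add_apply, LinearMap.sub_apply, Module.End.mul_apply, map_add, map_sub] at h
    simp only [hTdh, hTdC, dv, hTφ, map_add, map_sub,
      LinearMap.add_apply, LinearMap.sub_apply]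
    linear_combination (norm := module) h
  · intro x₁ x₂ x₃ x₄ x₅
    have h := LinearMap.congr_fun (hl4 (T x₁) (T x₂) (T x₃) (T x₄)) x₅
    simp only [LinearMap.add_apply, Module.End.mul_apply] at h
    simp only [hTφ, hTdC]
    linear_combination (norm := module) h
  · intro x₁ x₂ x₃ x₄ x₅
    have h := LinearMap.congr_fun (hc4 (T x₁) (T x₂) (T x₃) (T x₄)) x₅
    simp only [LinearMap.add_apply, Module.End.mul_apply] at h
    simp only [hTφ, hTdC]
    linear_combination (norm := module) h
  · intro x₁ x₂ x₃ x₄ x₅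
    have h := LinearMap.congr_fun (hc6 (T x₁) (T x₂) (T x₃) (T x₄)) x₅
    simp only [LinearMap.add_apply, LinearMap.sub_apply, Module.End.mul_apply, map_add, map_sub] at h
    simp only [hTdh, hTdC, dv, hTφ, map_add, map_sub,
      LinearMap.add_apply, LinearMap.sub_apply]
    linear_combination (norm := module) -h
end

section
/- Let (A,{·,·,·},α) be a 3-Hom-pre-Lie algebra and R: A → A a Rota-Baxter operator of weight zero (Rα = αR and {Rx,Ry,Rz} = R({Rx,Ry,z} + {Rx,y,Rz} + {x,Ry,Rz})). Then (A,↖,↗,α) is a 3-Hom-L-dendriform algebra with ↖(x,y,z) = {Rx,Ry,z} and ↗(x,y,z) = {x,Ry,Rz}. -/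
/-- A Rota-Baxter operator of weight zero on a 3-Hom-pre-Lie algebra induces a
3-Hom-L-dendriform algebra structure. -/
theorem stmt13 {K A : Type*} [Field K] [AddCommGroup A] [Module K A]
    (p : A → A → A → A) (α : A → A) (R : A →ₗ[K] A)
    (halg : Is3HomPreLie p α)
    (hcomm : ∀ x, R (α x) = α (R x))
    (hRB : ∀ x y z, p (R x) (R y) (R z) =
      R (p (R x) (R y) z + p (R x) y (R z) + p x (R y) (R z))) :
    IsDend (fun x y z => p (R x) (R y) z) (fun x y z => p x (R y) (R z)) α := by
  obtain ⟨hsk, hi1, hi2⟩ := halg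
  have hcyc : ∀ x y z : A, preC p x y z = preC p y z x := by
    intro x y z; simp only [preC]; abel
  have hdh : ∀ x y z : A,
      dh (fun x y z => p (R x) (R y) z) (fun x y z => p x (R y) (R z)) x y z
        = p (R x) (R y) z + p (R x) y (R z) + p x (R y) (R z) := by
    intro x y z
    simp only [dh]
    rw [hsk y (R x) (R z)]
    abel
  have hRdh : ∀ x y z : A,
      R (dh (fun x y z => p (R x) (R y) z) (fun x y z => p x (R y) (R z)) x y z)
        = p (R x) (R y) (R z) := by
    intro x y z
    rw [hdh x y z]
    exact (hRB x y z).symm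
  have hRdC : ∀ x y z : A,
      R (dC (fun x y z => p (R x) (R y) z) (fun x y z => p x (R y) (R z)) x y z)
        = preC p (R x) (R y) (R z) := by
    intro x y z
    simp only [dC, map_add, preC]
    rw [hRdh x y z, hRdh y z x, hRdh z x y]
  have hdv : ∀ x y z : A,
      dv (fun x y z => p (R x) (R y) z) (fun x y z => p x (R y) (R z)) x y z
        = preC p (R x) (R y) z := by
    intro x y z
    simp only [dv, preC]
    rw [hsk z (R y) (R x)]
    abel
  refine ⟨?_, ?_, ?_, ?_, ?_, ?_, ?_⟩
  · intro x y z
    beta_reduce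
    rw [hsk (R x) (R y) z]
    abel
  · intro x₁ x₂ x₃ x₄ x₅
    beta_reduce
    rw [hRdC x₁ x₂ x₃, hRdC x₁ x₂ x₄]
    simp only [hcomm]
    linear_combination (norm := abel1) hi1 (R x₁) (R x₂) (R x₃) (R x₄) x₅
      + hsk (α (R x₃)) (preC p (R x₁) (R x₂) (R x₄)) (α x₅)
  · intro x₁ x₂ x₃ x₄ x₅
    beta_reduce
    rw [hRdC x₁ x₂ x₃, hRdh x₁ x₂ x₄, hdv x₁ x₂ x₅]
    simp only [hcomm]
    linear_combination (norm := abel1) hi1 (R x₁) (R x₂) x₅ (R x₃) (R x₄)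
  · intro x₁ x₂ x₃ x₄ x₅
    beta_reduce
    rw [hRdh x₂ x₃ x₄, hdv x₁ x₂ x₅, hdv x₁ x₃ x₅]
    simp only [hcomm]
    have h := hi1 x₅ (R x₁) (R x₂) (R x₃) (R x₄)
    rw [hcyc x₅ (R x₁) (R x₂), hcyc x₅ (R x₁) (R x₃)] at h
    linear_combination (norm := abel1) h
      + hsk (α (R x₂)) (preC p (R x₁) (R x₃) x₅) (α (R x₄))
  · intro x₁ x₂ x₃ x₄ x₅
    beta_reduce
    rw [hRdC x₁ x₂ x₃]
    simp only [hcomm]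
    exact hi2 (R x₁) (R x₂) (R x₃) (R x₄) x₅
  · intro x₁ x₂ x₃ x₄ x₅
    beta_reduce
    rw [hRdC x₁ x₂ x₃]
    simp only [hcomm]
    have hA := hi1 (R x₁) (R x₂) x₅ (R x₃) (R x₄)
    have hB := hi1 (R x₂) (R x₃) x₅ (R x₁) (R x₄)
    rw [← hcyc (R x₁) (R x₂) (R x₃)] at hB
    have hC := hi1 (R x₃) (R x₁) x₅ (R x₂) (R x₄)
    rw [hcyc (R x₃) (R x₁) (R x₂)] at hC
    have hJ₁ := hi1 (R x₁) (R x₂) (R x₃) x₅ (R x₄)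
    have hJ₂ := hi1 (R x₂) (R x₃) (R x₁) x₅ (R x₄)
    rw [← hcyc (R x₁) (R x₂) (R x₃)] at hJ₂
    have hJ₃ := hi1 (R x₃) (R x₁) (R x₂) x₅ (R x₄)
    rw [hcyc (R x₃) (R x₁) (R x₂)] at hJ₃
    have hH := hi2 (R x₁) (R x₂) (R x₃) x₅ (R x₄)
    linear_combination (norm := abel1) - hA - hB - hC - hH - hJ₁ - hJ₂ - hJ₃
      - hsk (α (R x₁)) (preC p (R x₂) (R x₃) x₅) (α (R x₄))
      - hsk (α (R x₂)) (preC p (R x₃) (R x₁) x₅) (α (R x₄))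
      - hsk (α (R x₃)) (preC p (R x₁) (R x₂) x₅) (α (R x₄))
      - hsk (α (R x₁)) (α x₅) (p (R x₂) (R x₃) (R x₄))
      - hsk (α (R x₂)) (α x₅) (p (R x₃) (R x₁) (R x₄))
      - hsk (α (R x₃)) (α x₅) (p (R x₁) (R x₂) (R x₄))
      - hsk (preC p (R x₁) (R x₂) (R x₃)) (α x₅) (α (R x₄))
      - hsk (preC p (R x₁) (R x₂) (R x₃)) (α x₅) (α (R x₄))
  · intro x₁ x₂ x₃ x₄ x₅
    beta_reduce
    rw [hRdh x₂ x₃ x₄, hRdh x₁ x₃ x₄, hdv x₁ x₂ x₅]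
    simp only [hcomm]
    linear_combination (norm := abel1) - hi2 (R x₁) (R x₂) x₅ (R x₃) (R x₄)
      - hsk (α (R x₂)) (α x₅) (p (R x₁) (R x₃) (R x₄))
end

section
/- Let R₁, R₂ be commuting Rota-Baxter operators of weight zero on a 3-Hom-Lie algebra (A,[·,·,·],α). Then R₂ is a Rota-Baxter operator of weight zero on the 3-Hom-pre-Lie algebra (A,{·,·,·},α) with {x,y,z} = [R₁x, R₁y, z], i.e. {R₂x,R₂y,R₂z} = R₂({R₂x,R₂y,z} + {x,R₂y,R₂z} + {R₂x,y,R₂z}). -/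
/-- If `R₁, R₂` are commuting Rota-Baxter operators of weight zero on a 3-Hom-Lie
algebra, then `R₂` is a Rota-Baxter operator of weight zero on the 3-Hom-pre-Lie
algebra `{x,y,z} = [R₁x, R₁y, z]`. -/
theorem stmt14 {K A : Type*} [Field K] [AddCommGroup A] [Module K A]
    (b : A → A → A → A) (α : A → A) (R₁ R₂ : A →ₗ[K] A)
    (hA : Is3HomLie b α)
    (hcomm : ∀ x, R₁ (R₂ x) = R₂ (R₁ x))
    (hα₁ : ∀ x, R₁ (α x) = α (R₁ x)) (hα₂ : ∀ x, R₂ (α x) = α (R₂ x))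
    (hRB₁ : ∀ x y z, b (R₁ x) (R₁ y) (R₁ z) =
      R₁ (b (R₁ x) (R₁ y) z + b (R₁ x) y (R₁ z) + b x (R₁ y) (R₁ z)))
    (hRB₂ : ∀ x y z, b (R₂ x) (R₂ y) (R₂ z) =
      R₂ (b (R₂ x) (R₂ y) z + b (R₂ x) y (R₂ z) + b x (R₂ y) (R₂ z))) :
    ∀ x y z,
      b (R₁ (R₂ x)) (R₁ (R₂ y)) (R₂ z) =
        R₂ (b (R₁ (R₂ x)) (R₁ (R₂ y)) z + b (R₁ (R₂ x)) (R₁ y) (R₂ z) +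
          b (R₁ x) (R₁ (R₂ y)) (R₂ z)) := by
  intro x y z
  simp only [hcomm]
  exact hRB₂ (R₁ x) (R₁ y) z
end

section
/- Let (A,↖,↗,α) be a 3-Hom-L-dendriform algebra and N a derivation of both products (N∘(x,y,z) = ∘(Nx,y,z) + ∘(x,Ny,z) + ∘(x,y,Nz) for ∘ ∈ {↖,↗}) commuting with α. Then N is a Nijenhuis operator if and only if N is a Rota-Baxter operator of weight 0, i.e. ∘(Nx,Ny,Nz) = N(∘(Nx,Ny,z) + ∘(Nx,y,Nz) + ∘(x,Ny,Nz)) for ∘ ∈ {↖,↗}. -/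
/-- The Nijenhuis identity for a linear map `N` with respect to a ternary product `m`. -/
def NijOn {A : Type*} [AddCommGroup A] (m : A → A → A → A) (N : A → A) : Prop :=
  ∀ x y z,
    m (N x) (N y) (N z) =
      N (m (N x) (N y) z + m (N x) y (N z) + m x (N y) (N z) -
          N (m (N x) y z + m x (N y) z + m x y (N z)) + N (N (m x y z)))

/-- For a derivation `N` of a 3-Hom-L-dendriform algebra commuting with `α`, `N`
is a Nijenhuis operator iff `N` is a Rota-Baxter operator of weight 0. -/
theorem stmt16 {K A : Type*} [Field K] [AddCommGroup A] [Module K A]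
    (nw ne : A → A → A → A) (α : A → A) (N : A →ₗ[K] A)
    (h : IsDend nw ne α)
    (hcomm : ∀ x, N (α x) = α (N x))
    (hder1 : ∀ x y z, N (nw x y z) = nw (N x) y z + nw x (N y) z + nw x y (N z))
    (hder2 : ∀ x y z, N (ne x y z) = ne (N x) y z + ne x (N y) z + ne x y (N z)) :
    (NijOn nw (fun x => N x) ∧ NijOn ne (fun x => N x)) ↔
      ((∀ x y z, nw (N x) (N y) (N z) =
          N (nw (N x) (N y) z + nw (N x) y (N z) + nw x (N y) (N z))) ∧
       (∀ x y z, ne (N x) (N y) (N z) =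
          N (ne (N x) (N y) z + ne (N x) y (N z) + ne x (N y) (N z)))) := by
  constructor
  · rintro ⟨h1, h2⟩
    constructor
    · intro x y z
      have := h1 x y z
      simp only [← hder1 x y z, sub_add_cancel] at this
      exact this
    · intro x y z
      have := h2 x y z
      simp only [← hder2 x y z, sub_add_cancel] at this
      exact this
  · rintro ⟨h1, h2⟩
    constructor
    · intro x y z
      simp only [← hder1 x y z, sub_add_cancel]
      exact h1 x y z
    · intro x y z
      simp only [← hder2 x y z, sub_add_cancel]
      exact h2 x y z
end
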